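/- arXiv:2508.17136 — 3 statements merged into one kernel-verified Lean document; each statement's English description precedes it below -/
import Mathlib

section
/- Let K > 0 and let x₁,…,x_m ∈ ℝ^p be vectors all of whose coordinates lie in [−K, K]. Let Σ̂ = (1/m)∑_{i=1}^m xᵢ xᵢᵀ, and let Σ̂ = ∑_{j=1}^p λ̂ⱼ v̂ⱼ v̂ⱼᵀ be a spectral decomposition with orthonormal eigenvectors v̂ⱼ and eigenvalues λ̂ⱼ ≥ 0 ordered decreasingly. Then for every i, j, |√λ̂ᵢ · (v̂ᵢ)ⱼ| ≤ K; in particular, for any r̄ ≤ p, the matrix W = [√λ̂₁ v̂₁, …, √λ̂_r̄ v̂_r̄] ∈ ℝ^{p×r̄} satisfies ‖W‖_max ≤ K, where ‖·‖_max is the largest absolute value of an entry. -/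
/-! The `j`-th diagonal entry of `Σ̂` is both the mean of the squares `(xᵢ)ⱼ²`, hence at most `K²`,
and the sum `∑ᵢ λ̂ᵢ (v̂ᵢ)ⱼ²` of nonnegative terms, each of which is therefore at most `K²`. -/

namespace Matrix

variable {ι n R : Type*} [Fintype ι]

theorem sum_smul_vecMulVec_self_apply_self [CommSemiring R] (c : ι → R) (u : ι → n → R) (j : n) :
    (∑ i, c i • vecMulVec (u i) (u i)) j j = ∑ i, c i * u i j ^ 2 := by
  simp only [sum_apply, smul_apply, vecMulVec_apply, smul_eq_mul, sq]

theorem mul_sq_le_sum_smul_vecMulVec_self_apply_self [CommRing R] [LinearOrder R]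
    [IsStrictOrderedRing R] {c : ι → R} (hc : ∀ i, 0 ≤ c i) (u : ι → n → R) (i : ι) (j : n) :
    c i * u i j ^ 2 ≤ (∑ i, c i • vecMulVec (u i) (u i)) j j := by
  rw [sum_smul_vecMulVec_self_apply_self]
  exact Finset.single_le_sum (f := fun k ↦ c k * u k j ^ 2)
    (fun k _ ↦ mul_nonneg (hc k) (sq_nonneg _)) (Finset.mem_univ i)

theorem inv_card_smul_sum_vecMulVec_self_apply_self_le (x : ι → n → ℝ) {j : n} {K : ℝ}
    (hx : ∀ i, |x i j| ≤ K) :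
    ((Fintype.card ι : ℝ)⁻¹ • ∑ i, vecMulVec (x i) (x i)) j j ≤ K ^ 2 := by
  have hsum : ∑ i, x i j ^ 2 ≤ Fintype.card ι * K ^ 2 := by
    simpa using Finset.sum_le_card_nsmul Finset.univ _ _ fun i _ ↦
      sq_le_sq.2 <| (hx i).trans (le_abs_self K)
  simp only [smul_apply, sum_apply, vecMulVec_apply, smul_eq_mul, ← sq]
  exact inv_mul_le_of_le_mul₀ (Nat.cast_nonneg _) (sq_nonneg K) hsum

end Matrix

theorem diversified_projection_entry_bound_general
    (m p : ℕ) (K : ℝ) (hK : 0 < K)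
    (x : Fin m → Fin p → ℝ) (hx : ∀ i j, |x i j| ≤ K)
    (S : Matrix (Fin p) (Fin p) ℝ)
    (hS : S = (m : ℝ)⁻¹ • ∑ i, Matrix.vecMulVec (x i) (x i))
    (lam : Fin p → ℝ) (v : Fin p → Fin p → ℝ)
    (hlam : ∀ i, 0 ≤ lam i)
    (hdecomp : S = ∑ i, lam i • Matrix.vecMulVec (v i) (v i)) :
    (∀ i j, |Real.sqrt (lam i) * v i j| ≤ K) ∧
      ∀ (r : ℕ) (hr : r ≤ p) (W : Matrix (Fin p) (Fin r) ℝ),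
        (∀ (j : Fin p) (k : Fin r),
          W j k = Real.sqrt (lam (Fin.castLE hr k)) * v (Fin.castLE hr k) j) →
        ∀ (j : Fin p) (k : Fin r), |W j k| ≤ K := by
  have entry_bound (i j : Fin p) : |Real.sqrt (lam i) * v i j| ≤ K := by
    refine abs_le_of_sq_le_sq ?_ hK.le
    calc (Real.sqrt (lam i) * v i j) ^ 2 = lam i * v i j ^ 2 := by
          rw [mul_pow, Real.sq_sqrt (hlam i)]
      _ ≤ S j j := hdecomp ▸ Matrix.mul_sq_le_sum_smul_vecMulVec_self_apply_self hlam v i j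
      _ ≤ K ^ 2 := by
          simpa [hS] using Matrix.inv_card_smul_sum_vecMulVec_self_apply_self_le x fun i ↦ hx i j
  exact ⟨entry_bound, fun r hr W hW j k ↦ hW j k ▸ entry_bound _ _⟩

/-- Let `K > 0` and let `x₁,…,x_m ∈ ℝ^p` be vectors all of whose coordinates
lie in `[−K, K]`. Let `Σ̂ = (1/m)∑ᵢ xᵢ xᵢᵀ`, with spectral decomposition
`Σ̂ = ∑ⱼ λ̂ⱼ v̂ⱼ v̂ⱼᵀ` (orthonormal eigenvectors, eigenvalues `λ̂ⱼ ≥ 0` ordered decreasingly).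
Then for every `i, j`, `|√λ̂ᵢ · (v̂ᵢ)ⱼ| ≤ K`; in particular for any `r̄ ≤ p` the matrix
`W = [√λ̂₁ v̂₁, …, √λ̂_r̄ v̂_r̄]` satisfies `‖W‖_max ≤ K`. -/
theorem diversified_projection_entry_bound
    (m p : ℕ) (hm : 0 < m) (K : ℝ) (hK : 0 < K)
    (x : Fin m → Fin p → ℝ) (hx : ∀ i j, |x i j| ≤ K)
    (S : Matrix (Fin p) (Fin p) ℝ)
    (hS : S = (m : ℝ)⁻¹ • ∑ i, Matrix.vecMulVec (x i) (x i))
    (lam : Fin p → ℝ) (v : Fin p → Fin p → ℝ)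
    (hlam : ∀ i, 0 ≤ lam i)
    (hmono : ∀ i j : Fin p, i ≤ j → lam j ≤ lam i)
    (horth : ∀ i j, dotProduct (v i) (v j) = if i = j then (1 : ℝ) else 0)
    (hdecomp : S = ∑ i, lam i • Matrix.vecMulVec (v i) (v i)) :
    (∀ i j, |Real.sqrt (lam i) * v i j| ≤ K) ∧
      ∀ (r : ℕ) (hr : r ≤ p) (W : Matrix (Fin p) (Fin r) ℝ),
        (∀ (j : Fin p) (k : Fin r),
          W j k = Real.sqrt (lam (Fin.castLE hr k)) * v (Fin.castLE hr k) j) →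
        ∀ (j : Fin p) (k : Fin r), |W j k| ≤ K :=
  diversified_projection_entry_bound_general m p K hK x hx S hS lam v hlam hdecomp
end

section
/- Let n ≥ 1, let x₁,…,xₙ be points of an arbitrary set X, let ε₁,…,εₙ ∈ ℝ, let μ*, μ̃, μ̂ : X → ℝ be functions, and set yᵢ = μ*(xᵢ) + εᵢ. Let λ ≥ 0, δ ≥ 0, and let P̂ ≥ 0, P̃ ≥ 0 be real penalty values with P̃ ≤ s. If (1/n)∑ᵢ(yᵢ − μ̂(xᵢ))² + λ P̂ ≤ (1/n)∑ᵢ(yᵢ − μ̃(xᵢ))² + λ P̃ + δ, then (1/n)∑ᵢ(μ̂(xᵢ) − μ̃(xᵢ))² + 2λ P̂ ≤ (4/n)∑ᵢ(μ̃(xᵢ) − μ*(xᵢ))² + (4/n)∑ᵢ εᵢ (μ̂(xᵢ) − μ̃(xᵢ)) + 2λ s + 2δ. -/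
/-- The deterministic "basic inequality" for a `δ`-approximate penalized
empirical risk minimizer `μ̂` compared against a reference function `μ̃` with penalty at
most `s`, under the model `yᵢ = μ*(xᵢ) + εᵢ`. -/
theorem penalized_erm_basic_inequality
    {X : Type*} (n : ℕ) (hn : 1 ≤ n)
    (x : Fin n → X) (ε : Fin n → ℝ) (μs μt μh : X → ℝ) (y : Fin n → ℝ)
    (hy : ∀ i, y i = μs (x i) + ε i)
    (lam δ Ph Pt s : ℝ)
    (hlam : 0 ≤ lam) (hδ : 0 ≤ δ) (hPh : 0 ≤ Ph) (hPt : 0 ≤ Pt) (hPts : Pt ≤ s)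
    (hmin : (1 / (n : ℝ)) * ∑ i, (y i - μh (x i)) ^ 2 + lam * Ph ≤
      (1 / (n : ℝ)) * ∑ i, (y i - μt (x i)) ^ 2 + lam * Pt + δ) :
    (1 / (n : ℝ)) * ∑ i, (μh (x i) - μt (x i)) ^ 2 + 2 * lam * Ph ≤
      (4 / (n : ℝ)) * ∑ i, (μt (x i) - μs (x i)) ^ 2
        + (4 / (n : ℝ)) * ∑ i, ε i * (μh (x i) - μt (x i))
        + 2 * lam * s + 2 * δ := by
  have hnpos : (0:ℝ) < n := by exact_mod_cast Nat.lt_of_lt_of_le Nat.zero_lt_one hn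
  have hinv : (0:ℝ) < 1 / n := by positivity
  -- identity relating the empirical risks
  have hid : ∑ i, (y i - μh (x i)) ^ 2 - ∑ i, (y i - μt (x i)) ^ 2
      = ∑ i, (μh (x i) - μt (x i)) ^ 2
        - 2 * ∑ i, ε i * (μh (x i) - μt (x i))
        + 2 * ∑ i, (μh (x i) - μt (x i)) * (μt (x i) - μs (x i)) := by
    rw [← Finset.sum_sub_distrib, Finset.mul_sum, Finset.mul_sum,
      ← Finset.sum_sub_distrib, ← Finset.sum_add_distrib]
    refine Finset.sum_congr rfl fun i _ => ?_
    rw [hy i]; ring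
  have hsq : (0:ℝ) ≤ ∑ i, ((μh (x i) - μt (x i)) + 2 * (μt (x i) - μs (x i))) ^ 2 :=
    Finset.sum_nonneg fun i _ => sq_nonneg _
  have hsqid : ∑ i, ((μh (x i) - μt (x i)) + 2 * (μt (x i) - μs (x i))) ^ 2
      = ∑ i, (μh (x i) - μt (x i)) ^ 2
        + 4 * ∑ i, (μh (x i) - μt (x i)) * (μt (x i) - μs (x i))
        + 4 * ∑ i, (μt (x i) - μs (x i)) ^ 2 := by
    rw [Finset.mul_sum, Finset.mul_sum, ← Finset.sum_add_distrib, ← Finset.sum_add_distrib]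
    exact Finset.sum_congr rfl fun i _ => by ring
  rw [hsqid] at hsq
  have hlams : lam * Pt ≤ lam * s := mul_le_mul_of_nonneg_left hPts hlam
  have h2 : (1/(n:ℝ)) * (∑ i, (y i - μh (x i)) ^ 2 - ∑ i, (y i - μt (x i)) ^ 2)
      ≤ lam * Pt - lam * Ph + δ := by
    rw [mul_sub]; linarith
  rw [hid, mul_add, mul_sub] at h2
  have h3 := mul_le_mul_of_nonneg_left hsq (le_of_lt hinv)
  generalize ∑ i, (μh (x i) - μt (x i)) ^ 2 = SA2 at *
  generalize ∑ i, ε i * (μh (x i) - μt (x i)) = SeA at *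
  generalize ∑ i, (μh (x i) - μt (x i)) * (μt (x i) - μs (x i)) = SAB at *
  generalize ∑ i, (μt (x i) - μs (x i)) ^ 2 = SB2 at *
  have e1 : (4:ℝ)/n * SB2 = 4 * (1/n * SB2) := by ring
  have e2 : (4:ℝ)/n * SeA = 4 * (1/n * SeA) := by ring
  rw [e1, e2]
  nlinarith [h3, h2, hlams]
end

section
/- Let N, p, s be positive integers, let B > 0, and let 0 < τ ≤ ε. Define the clipped-L₁ function ψ_τ(x) = min(|x|/τ, 1) for x ∈ ℝ, and let S = {Θ ∈ ℝ^{N×p} : |Θ_{ij}| ≤ B for all i,j, and ∑_{i,j} ψ_τ(Θ_{ij}) ≤ s}. Then there exists a finite set C ⊆ ℝ^{N×p} with cardinality at most (Np)^s · ⌈2B/ε⌉^s such that for every Θ ∈ S there is some Θ' ∈ C with max_{i,j} |Θ_{ij} − Θ'_{ij}| ≤ ε. -/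
/-- Sparse covering of clipped-`L₁` constrained matrices: if `0 < τ ≤ ε`
and `S = {Θ ∈ ℝ^{N×p} : |Θ_{ij}| ≤ B, ∑_{i,j} min(|Θ_{ij}|/τ, 1) ≤ s}`, then there is a
finite set `C` with `|C| ≤ (Np)^s ⌈2B/ε⌉^s` such that every `Θ ∈ S` is within entrywise
sup-distance `ε` of some `Θ' ∈ C`. -/
theorem clipped_l1_sparse_covering
    (N p s : ℕ) (hN : 0 < N) (hp : 0 < p) (hs : 0 < s)
    (B τ ε : ℝ) (hB : 0 < B) (hτ : 0 < τ) (hτε : τ ≤ ε) :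
    ∃ C : Finset (Matrix (Fin N) (Fin p) ℝ),
      C.card ≤ (N * p) ^ s * (⌈2 * B / ε⌉₊) ^ s ∧
      ∀ Θ : Matrix (Fin N) (Fin p) ℝ,
        (∀ i j, |Θ i j| ≤ B) →
        (∑ i, ∑ j, min (|Θ i j| / τ) 1 ≤ (s : ℝ)) →
        ∃ Θ' ∈ C, ∀ i j, |Θ i j - Θ' i j| ≤ ε := by
  classical
  have hε : 0 < ε := lt_of_lt_of_le hτ hτε
  set M : ℕ := ⌈2 * B / ε⌉₊ with hMdef
  have hMpos : 0 < M := Nat.ceil_pos.mpr (by positivity)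
  have hMR : (0:ℝ) < M := by exact_mod_cast hMpos
  set h : ℝ := 2 * B / M with hhdef
  have hhpos : 0 < h := by positivity
  have hMB : (M:ℝ) * h = 2 * B := by
    rw [hhdef]; field_simp
  have hhle : h ≤ ε := by
    have h1 : 2 * B / ε ≤ M := Nat.le_ceil _
    have h2 : 2 * B ≤ M * ε := (div_le_iff₀ hε).mp h1
    rw [hhdef, div_le_iff₀ hMR]
    linarith
  -- grid lemma
  have hgrid : ∀ x : ℝ, |x| ≤ B → ∃ k : Fin M, |x - (-B + (k : ℕ) * h)| ≤ ε := by
    intro x hx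
    obtain ⟨hx1, hx2⟩ := abs_le.mp hx
    have hxB0 : 0 ≤ x + B := by linarith
    have hnonneg : 0 ≤ (x + B) / h := div_nonneg hxB0 hhpos.le
    set n := ⌊(x + B) / h⌋₊ with hndef
    have h1 : (n : ℝ) ≤ (x + B) / h := Nat.floor_le hnonneg
    have h2 : (x + B) / h < n + 1 := Nat.lt_floor_add_one _
    have h1' : (n : ℝ) * h ≤ x + B := (le_div_iff₀ hhpos).mp h1
    have h2' : x + B < ((n : ℝ) + 1) * h := (div_lt_iff₀ hhpos).mp h2
    by_cases hc : n ≤ M - 1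
    · refine ⟨⟨n, lt_of_le_of_lt hc (Nat.sub_lt hMpos one_pos)⟩, ?_⟩
      rw [abs_le]
      constructor <;> simp only [] <;> push_cast <;> nlinarith
    · refine ⟨⟨M - 1, Nat.sub_lt hMpos one_pos⟩, ?_⟩
      have hMn : M ≤ n := by omega
      have hMn' : (M : ℝ) ≤ n := by exact_mod_cast hMn
      have hxB : (M : ℝ) * h ≤ x + B := le_trans (by nlinarith) h1'
      have hcast : ((M - 1 : ℕ) : ℝ) = (M : ℝ) - 1 := by
        push_cast [Nat.cast_sub hMpos]; ring
      rw [abs_le]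
      constructor <;> simp only [hcast] <;> nlinarith
  -- the covering set
  set build : (Fin s → (Fin N × Fin p) × Fin M) → Matrix (Fin N) (Fin p) ℝ :=
    fun f i j => if hx : ∃ k, (f k).1 = (i, j)
      then -B + (((f hx.choose).2 : ℕ) : ℝ) * h else 0 with hbuild
  refine ⟨Finset.image build Finset.univ, ?_, ?_⟩
  · calc (Finset.image build Finset.univ).card
        ≤ (Finset.univ : Finset (Fin s → (Fin N × Fin p) × Fin M)).card :=
          Finset.card_image_le
      _ = (N * p * M) ^ s := by
          rw [Finset.card_univ, Fintype.card_fun, Fintype.card_prod,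
            Fintype.card_prod, Fintype.card_fin, Fintype.card_fin, Fintype.card_fin, Fintype.card_fin]
      _ = (N * p) ^ s * M ^ s := mul_pow _ _ _
  · intro Θ hbound hsum
    -- support set
    set A : Finset (Fin N × Fin p) :=
      Finset.univ.filter (fun q => τ < |Θ q.1 q.2|) with hAdef
    have hAcard : A.card ≤ s := by
      have key : (A.card : ℝ) ≤ (s : ℝ) := by
        calc (A.card : ℝ) = ∑ _q ∈ A, (1 : ℝ) := by simp
          _ ≤ ∑ q ∈ A, min (|Θ q.1 q.2| / τ) 1 := by
              refine Finset.sum_le_sum (fun q hq => ?_)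
              have hq' : τ < |Θ q.1 q.2| := by
                simpa [hAdef] using hq
              exact le_min ((one_le_div hτ).mpr hq'.le) le_rfl
          _ ≤ ∑ q : Fin N × Fin p, min (|Θ q.1 q.2| / τ) 1 := by
              refine Finset.sum_le_sum_of_subset_of_nonneg (Finset.subset_univ _)
                (fun q _ _ => le_min (by positivity) zero_le_one)
          _ = ∑ i, ∑ j, min (|Θ i j| / τ) 1 := by
              exact Fintype.sum_prod_type (f := fun q : Fin N × Fin p => min (|Θ q.1 q.2| / τ) 1)
          _ ≤ (s : ℝ) := hsum
      exact_mod_cast key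
    -- choose grid indices
    have hk : ∀ q : Fin N × Fin p,
        ∃ k : Fin M, |Θ q.1 q.2 - (-B + (k : ℕ) * h)| ≤ ε :=
      fun q => hgrid _ (hbound _ _)
    choose idx hidxspec using hk
    -- enumerate A
    obtain ⟨pos, hsurj⟩ : ∃ pos : Fin s → Fin N × Fin p, ∀ q ∈ A, ∃ k, pos k = q := by
      have q0 : Fin N × Fin p := (⟨0, hN⟩, ⟨0, hp⟩)
      refine ⟨fun k => A.toList.getD k q0, ?_⟩
      intro q hq
      have hmem : q ∈ A.toList := (Finset.mem_toList).mpr hq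
      obtain ⟨n, hn, hget⟩ := List.getElem_of_mem hmem
      have hlen : A.toList.length = A.card := Finset.length_toList A
      have hns : n < s := lt_of_lt_of_le (by omega) hAcard
      refine ⟨⟨n, hns⟩, ?_⟩
      simp only []
      rw [List.getD_eq_getElem A.toList q0 (by simpa using hn)]
      exact hget
    set g : Fin s → (Fin N × Fin p) × Fin M := fun k => (pos k, idx (pos k)) with hg
    refine ⟨build g, Finset.mem_image_of_mem _ (Finset.mem_univ _), ?_⟩
    intro i j
    by_cases hex : ∃ k, (g k).1 = (i, j)
    · have hval : build g i j = -B + (((g hex.choose).2 : ℕ) : ℝ) * h := by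
        simp only [hbuild]; rw [dif_pos hex]
      have hchoose : (g hex.choose).1 = (i, j) := hex.choose_spec
      simp only [hg] at hchoose
      have hc2 : (g hex.choose).2 = idx (i, j) := by
        simp only [hg]; rw [hchoose]
      rw [hval, hc2]
      exact hidxspec (i, j)
    · have hval : build g i j = 0 := by
        simp only [hbuild]; rw [dif_neg hex]
      have hnA : (i, j) ∉ A := by
        intro hmem
        obtain ⟨k, hk'⟩ := hsurj _ hmem
        exact hex ⟨k, by simp [hg, hk']⟩
      have hle : ¬ τ < |Θ i j| := by
        simpa [hAdef] using hnA
      rw [hval]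
      simpa using le_trans (not_lt.mp hle) hτε
end
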